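/- Let X = {x₁, …, xₙ} be an n-point subset of a real Hilbert space and let 0 < α < 1. Then the snowflake metric space X^α (same points, with distance d_α(x,y) = ‖x - y‖^α) cannot be isometrically embedded into Euclidean space ℝ^{n-2}. Equivalently, the images of the n points under any isometric embedding of X^α into a Euclidean space are affinely independent. -/

import Mathlib

/-!
For `0 < α < 1` the function `t ↦ t ^ α` is a positive mixture of the functions
`t ↦ 1 - exp (-t s)`: `t ^ α * K = ∫₀^∞ (1 - exp (-t s)) s ^ (-1 - α) ds` with `0 < K`.
Gaussian kernels `exp (-‖x i - x j‖² s)` are positive semidefinite (Schur product theorem applied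
to the exponential series of the Gram matrix), and on distinct points they tend to the identity
as `s → ∞`. Hence for weights `w ≠ 0` with `∑ w = 0`, the form `∑ w i w j ‖x i - x j‖ ^ (2α)` is
`-1/K` times the integral of a nonnegative function that is eventually positive, so it is
strictly negative. An affine dependence `∑ w i • f i = 0` among points of a Euclidean space with
`‖f i - f j‖ = ‖x i - x j‖ ^ α` would make the same form equal `-2 ‖∑ w i • f i‖² = 0`.
-/

open Finset MeasureTheory Set Filter Topology Real Matrix
open scoped ComplexOrder

namespace Matrix

variable {ι : Type*}

theorem PosSemidef.map_pow [Finite ι] {𝕜 : Type*} [RCLike 𝕜] {A : Matrix ι ι 𝕜}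
    (hA : A.PosSemidef) (k : ℕ) : (A.map (· ^ k)).PosSemidef := by
  induction k with
  | zero =>
    convert posSemidef_vecMulVec_self_star (fun _ : ι => (1 : 𝕜)) using 1
    ext; simp [vecMulVec]
  | succ k ih =>
    have hsucc : A.map (· ^ (k + 1)) = A.map (· ^ k) ⊙ A := by ext; simp [pow_succ]
    exact hsucc ▸ ih.hadamard hA

theorem PosSemidef.map_exp [Fintype ι] {A : Matrix ι ι ℝ} (hA : A.PosSemidef) :
    (A.map Real.exp).PosSemidef := by
  refine posSemidef_iff_dotProduct_mulVec.2 ⟨hA.isHermitian.map _ fun _ => rfl, fun v => ?_⟩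
  have hseries : HasSum (fun k : ℕ => star v ⬝ᵥ (((k.factorial : ℝ)⁻¹ • A.map (· ^ k)) *ᵥ v))
      (star v ⬝ᵥ (A.map Real.exp *ᵥ v)) := by
    simp only [dotProduct, mulVec, smul_apply, map_apply, smul_eq_mul]
    refine hasSum_sum fun i _ => (hasSum_sum fun j _ => ?_).mul_left _
    rw [Real.exp_eq_exp_ℝ]
    simpa [div_eq_inv_mul] using (NormedSpace.expSeries_div_hasSum_exp (A i j)).mul_right (v j)
  refine hseries.nonneg fun k => ?_
  rw [smul_mulVec, dotProduct_smul, smul_eq_mul]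
  exact mul_nonneg (by positivity) ((hA.map_pow k).dotProduct_mulVec_nonneg v)

theorem posSemidef_exp_neg_norm_sub_sq_mul [Fintype ι] {E : Type*} [NormedAddCommGroup E]
    [InnerProductSpace ℝ E] (x : ι → E) {s : ℝ} (hs : 0 ≤ s) :
    (of fun i j => Real.exp (-(‖x i - x j‖ ^ 2 * s))).PosSemidef := by
  set d : ι → ℝ := fun i => Real.exp (-(‖x i‖ ^ 2 * s))
  have hsplit : of (fun i j => Real.exp (-(‖x i - x j‖ ^ 2 * s)))
      = vecMulVec d (star d) ⊙ ((2 * s) • gram ℝ x).map Real.exp := by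
    ext i j
    simp only [of_apply, hadamard_apply, vecMulVec_apply, star_trivial, map_apply, smul_apply,
      gram, smul_eq_mul, d, ← Real.exp_add, norm_sub_sq_real]
    ring_nf
  exact hsplit ▸ (posSemidef_vecMulVec_self_star d).hadamard
    ((posSemidef_gram ℝ x).smul (by positivity)).map_exp

end Matrix

theorem setIntegral_Ioi_pos {f : ℝ → ℝ} {a : ℝ} (hf : IntegrableOn f (Ioi a))
    (hf₀ : ∀ s ∈ Ioi a, 0 ≤ f s) (hf_pos : ∀ᶠ s in atTop, 0 < f s) :
    0 < ∫ s in Ioi a, f s := by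
  rw [setIntegral_pos_iff_support_of_nonneg_ae (ae_restrict_of_forall_mem measurableSet_Ioi hf₀) hf]
  obtain ⟨b, hb⟩ := eventually_atTop.1 (hf_pos.and (eventually_gt_atTop a))
  calc (0 : ENNReal) < volume (Ici b) := by simp
    _ ≤ volume (Function.support f ∩ Ioi a) :=
      measure_mono fun s hs => ⟨(hb s hs).1.ne', (hb s hs).2⟩

section SnowflakeIntegral

variable {α : ℝ}

theorem integrableOn_one_sub_exp_neg_mul_mul_rpow (hα₀ : 0 < α) (hα₁ : α < 1) {r : ℝ}
    (hr : 0 ≤ r) : IntegrableOn (fun s => (1 - exp (-(r * s))) * s ^ (-1 - α)) (Ioi 0) := by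
  have hcont : ContinuousOn (fun s => (1 - exp (-(r * s))) * s ^ (-1 - α)) (Ioi 0) :=
    ContinuousOn.mul (by fun_prop) (continuousOn_id.rpow_const fun s hs => Or.inl (ne_of_gt hs))
  have hbound : ∀ s ∈ Ioi (0 : ℝ), 0 ≤ 1 - exp (-(r * s)) ∧ 1 - exp (-(r * s)) ≤ r * s ∧
      1 - exp (-(r * s)) ≤ 1 := fun s hs => by
    have hrs : 0 ≤ r * s := mul_nonneg hr (le_of_lt hs)
    refine ⟨sub_nonneg.2 (exp_le_one_iff.2 (by linarith)), ?_, by linarith [exp_pos (-(r * s))]⟩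
    linarith [add_one_le_exp (-(r * s))]
  have hnorm : ∀ s ∈ Ioi (0 : ℝ), ‖(1 - exp (-(r * s))) * s ^ (-1 - α)‖ =
      (1 - exp (-(r * s))) * s ^ (-1 - α) := fun s hs =>
    Real.norm_of_nonneg (mul_nonneg (hbound s hs).1 (rpow_nonneg (le_of_lt hs) _))
  rw [← Ioc_union_Ioi_eq_Ioi zero_le_one]
  refine IntegrableOn.union ?_ ?_
  · have hdom : IntegrableOn (fun s : ℝ => r * s ^ (-α)) (Ioc 0 1) :=
      ((integrableOn_Ioc_iff_integrableOn_Ioo (by simp)).2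
        ((intervalIntegral.integrableOn_Ioo_rpow_iff one_pos).2 (by linarith))).const_mul r
    refine hdom.mono' ((hcont.mono Ioc_subset_Ioi_self).aestronglyMeasurable measurableSet_Ioc)
      ((ae_restrict_iff' measurableSet_Ioc).2 (ae_of_all _ fun s hs => ?_))
    have hs₀ : s ∈ Ioi (0 : ℝ) := hs.1
    rw [hnorm s hs₀]
    calc (1 - exp (-(r * s))) * s ^ (-1 - α) ≤ r * s * s ^ (-1 - α) :=
          mul_le_mul_of_nonneg_right (hbound s hs₀).2.1 (rpow_nonneg (le_of_lt hs.1) _)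
      _ = r * s ^ (-α) := by
          rw [mul_assoc, ← rpow_one_add' (le_of_lt hs.1) (by linarith)]
          ring_nf
  · refine (integrableOn_Ioi_rpow_of_lt (a := -1 - α) (by linarith) one_pos).mono'
      ((hcont.mono (Ioi_subset_Ioi zero_le_one)).aestronglyMeasurable measurableSet_Ioi)
      ((ae_restrict_iff' measurableSet_Ioi).2 (ae_of_all _ fun s hs => ?_))
    have hs₀ : s ∈ Ioi (0 : ℝ) := lt_trans one_pos (mem_Ioi.1 hs)
    rw [hnorm s hs₀]
    exact mul_le_of_le_one_left (rpow_nonneg (le_of_lt hs₀) _) (hbound s hs₀).2.2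

theorem integral_one_sub_exp_neg_mul_mul_rpow (hα : α ≠ 0) {r : ℝ} (hr : 0 ≤ r) :
    ∫ s in Ioi 0, (1 - exp (-(r * s))) * s ^ (-1 - α) =
      r ^ α * ∫ s in Ioi 0, (1 - exp (-s)) * s ^ (-1 - α) := by
  rcases hr.eq_or_lt with rfl | hr
  · simp [zero_rpow hα]
  have hscale : ∀ s ∈ Ioi (0 : ℝ), (1 - exp (-(r * s))) * s ^ (-1 - α) =
      r ^ (1 + α) * ((1 - exp (-(r * s))) * (r * s) ^ (-1 - α)) := fun s hs => by
    rw [mul_rpow hr.le (le_of_lt hs), mul_left_comm, ← mul_assoc (r ^ (1 + α)), ← rpow_add hr]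
    simp
  rw [setIntegral_congr_fun measurableSet_Ioi hscale, integral_const_mul,
    integral_comp_mul_left_Ioi (fun u => (1 - exp (-u)) * u ^ (-1 - α)) 0 hr, mul_zero,
    smul_eq_mul, ← mul_assoc, ← rpow_neg_one r, ← rpow_add hr]
  ring_nf

theorem integral_one_sub_exp_neg_mul_rpow_pos (hα₀ : 0 < α) (hα₁ : α < 1) :
    0 < ∫ s in Ioi 0, (1 - exp (-s)) * s ^ (-1 - α) := by
  have hpos : ∀ s ∈ Ioi (0 : ℝ), 0 < (1 - exp (-s)) * s ^ (-1 - α) := fun s hs =>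
    mul_pos (sub_pos.2 (exp_lt_one_iff.2 (neg_neg_of_pos hs))) (rpow_pos_of_pos hs _)
  exact setIntegral_Ioi_pos
    (by simpa using integrableOn_one_sub_exp_neg_mul_mul_rpow hα₀ hα₁ zero_le_one)
    (fun s hs => (hpos s hs).le) ((eventually_gt_atTop 0).mono hpos)

end SnowflakeIntegral

section NegativeType

variable {ι E : Type*} [Fintype ι] [NormedAddCommGroup E]

theorem sum_mul_mul_exp_neg_norm_sub_sq_mul_nonneg [InnerProductSpace ℝ E] (x : ι → E)
    (w : ι → ℝ) {s : ℝ} (hs : 0 ≤ s) :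
    0 ≤ ∑ i, ∑ j, w i * w j * exp (-(‖x i - x j‖ ^ 2 * s)) := by
  have h := (posSemidef_exp_neg_norm_sub_sq_mul x hs).dotProduct_mulVec_nonneg w
  simp only [dotProduct, mulVec, star_trivial, of_apply, mul_sum] at h
  exact h.trans_eq (sum_congr rfl fun i _ => sum_congr rfl fun j _ => by ring)

theorem tendsto_sum_mul_mul_exp_neg_norm_sub_sq_mul {x : ι → E} (hx : Function.Injective x)
    (w : ι → ℝ) :
    Tendsto (fun s => ∑ i, ∑ j, w i * w j * exp (-(‖x i - x j‖ ^ 2 * s))) atTop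
      (𝓝 (∑ i, w i ^ 2)) := by
  classical
  have hentry : ∀ i j, Tendsto (fun s => exp (-(‖x i - x j‖ ^ 2 * s))) atTop
      (𝓝 (if i = j then 1 else 0)) := by
    intro i j
    split_ifs with hij
    · simp [hij]
    · have hpos : 0 < ‖x i - x j‖ ^ 2 := by
        have := sub_ne_zero.2 (hx.ne hij)
        positivity
      exact tendsto_exp_atBot.comp (tendsto_neg_atTop_atBot.comp (tendsto_id.const_mul_atTop hpos))
  simpa [sq] using tendsto_finsetSum univ fun i _ => tendsto_finsetSum univ fun j _ =>
    (hentry i j).const_mul (w i * w j)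

theorem integral_sum_mul_mul_one_sub_exp_neg_norm_sub_sq_mul_rpow (x : ι → E) (w : ι → ℝ)
    {α : ℝ} (hα₀ : 0 < α) (hα₁ : α < 1) :
    ∫ s in Ioi 0, ∑ i, ∑ j, w i * w j * ((1 - exp (-(‖x i - x j‖ ^ 2 * s))) * s ^ (-1 - α)) =
      (∑ i, ∑ j, w i * w j * ‖x i - x j‖ ^ (2 * α)) *
        ∫ s in Ioi 0, (1 - exp (-s)) * s ^ (-1 - α) := by
  have hint : ∀ i j, IntegrableOn
      (fun s => w i * w j * ((1 - exp (-(‖x i - x j‖ ^ 2 * s))) * s ^ (-1 - α))) (Ioi 0) :=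
    fun i j => (integrableOn_one_sub_exp_neg_mul_mul_rpow hα₀ hα₁ (sq_nonneg _)).const_mul _
  rw [integral_finsetSum _ fun i _ => integrable_finsetSum _ fun j _ => hint i j, sum_mul]
  refine sum_congr rfl fun i _ => ?_
  rw [integral_finsetSum _ fun j _ => hint i j, sum_mul]
  refine sum_congr rfl fun j _ => ?_
  rw [integral_const_mul, integral_one_sub_exp_neg_mul_mul_rpow hα₀.ne' (sq_nonneg _),
    ← rpow_natCast, ← rpow_mul (norm_nonneg _), Nat.cast_ofNat]
  ring

theorem sum_mul_mul_norm_sub_rpow_neg [InnerProductSpace ℝ E] {x : ι → E}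
    (hx : Function.Injective x) {α : ℝ} (hα₀ : 0 < α) (hα₁ : α < 1) {w : ι → ℝ}
    (hw : ∑ i, w i = 0) (hw₀ : w ≠ 0) :
    ∑ i, ∑ j, w i * w j * ‖x i - x j‖ ^ (2 * α) < 0 := by
  set G : ℝ → ℝ := fun s => ∑ i, ∑ j, w i * w j * exp (-(‖x i - x j‖ ^ 2 * s))
  have hww : ∑ i, ∑ j, w i * w j = 0 := by rw [← sum_mul_sum, hw, zero_mul]
  have hG : (fun s => ∑ i, ∑ j, w i * w j * ((1 - exp (-(‖x i - x j‖ ^ 2 * s))) * s ^ (-1 - α)))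
      = fun s => -(G s * s ^ (-1 - α)) := funext fun s => by
    calc _ = (∑ i, ∑ j, w i * w j) * s ^ (-1 - α) - G s * s ^ (-1 - α) := by
          simp only [G, sum_mul, ← sum_sub_distrib]
          exact sum_congr rfl fun i _ => sum_congr rfl fun j _ => by ring
      _ = -(G s * s ^ (-1 - α)) := by rw [hww]; ring
  have hG_int : IntegrableOn (fun s => -(G s * s ^ (-1 - α))) (Ioi 0) := hG ▸
    integrable_finsetSum _ fun i _ => integrable_finsetSum _ fun j _ =>
      (integrableOn_one_sub_exp_neg_mul_mul_rpow hα₀ hα₁ (sq_nonneg _)).const_mul _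
  have hlim_pos : 0 < ∑ i, w i ^ 2 := by
    obtain ⟨i, hi⟩ := Function.ne_iff.1 hw₀
    exact sum_pos' (fun i _ => sq_nonneg (w i)) ⟨i, mem_univ i, sq_pos_of_ne_zero hi⟩
  have hG_pos : 0 < ∫ s in Ioi 0, G s * s ^ (-1 - α) := by
    refine setIntegral_Ioi_pos (by simpa using hG_int.neg) (fun s hs =>
        mul_nonneg (sum_mul_mul_exp_neg_norm_sub_sq_mul_nonneg x w (le_of_lt hs))
          (rpow_nonneg (le_of_lt hs) _)) ?_
    filter_upwards [(tendsto_sum_mul_mul_exp_neg_norm_sub_sq_mul hx w).eventually_const_lt hlim_pos,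
      eventually_gt_atTop 0] with s hGs hs
    exact mul_pos hGs (rpow_pos_of_pos hs _)
  have hrep := integral_sum_mul_mul_one_sub_exp_neg_norm_sub_sq_mul_rpow x w hα₀ hα₁
  rw [hG, integral_neg] at hrep
  exact neg_of_mul_neg_left (by linarith) (integral_one_sub_exp_neg_mul_rpow_pos hα₀ hα₁).le

end NegativeType

theorem affineIndependent_of_norm_sub_eq_rpow {ι E F : Type*} [Fintype ι] [NormedAddCommGroup E]
    [InnerProductSpace ℝ E] [NormedAddCommGroup F] [InnerProductSpace ℝ F] {x : ι → E}
    (hx : Function.Injective x) {α : ℝ} (hα₀ : 0 < α) (hα₁ : α < 1) {f : ι → F}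
    (hf : ∀ i j, ‖f i - f j‖ = ‖x i - x j‖ ^ α) : AffineIndependent ℝ f := by
  refine (affineIndependent_iff_of_fintype ℝ f).2 fun w hw hdep => ?_
  suffices w = 0 from fun i => congrFun this i
  by_contra hw₀
  have hdist : ∀ i j, dist (f i) (f j) * dist (f i) (f j) = ‖x i - x j‖ ^ (2 * α) := fun i j => by
    rw [dist_eq_norm, hf, ← rpow_add' (norm_nonneg _) (by positivity), two_mul]
  have hform := EuclideanGeometry.inner_weightedVSub f hw f hw
  simp only [hdep, inner_zero_left, hdist] at hform
  linarith [sum_mul_mul_norm_sub_rpow_neg hx hα₀ hα₁ hw hw₀]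

theorem snowflake_embedding_affineIndependent_general {H : Type*} [NormedAddCommGroup H]
    [InnerProductSpace ℝ H]
    (n : ℕ) (x : Fin n → H) (hx : Function.Injective x) (α : ℝ) (hα₀ : 0 < α) (hα₁ : α < 1) :
    (∀ k : ℕ, ∀ f : Fin n → EuclideanSpace ℝ (Fin k),
      (∀ i j, ‖f i - f j‖ = ‖x i - x j‖ ^ α) → AffineIndependent ℝ f) ∧
    (2 ≤ n → ¬ ∃ f : Fin n → EuclideanSpace ℝ (Fin (n - 2)),
      ∀ i j, ‖f i - f j‖ = ‖x i - x j‖ ^ α) := by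
  refine ⟨fun k f => affineIndependent_of_norm_sub_eq_rpow hx hα₀ hα₁, fun hn ⟨f, hf⟩ => ?_⟩
  have hcard := (affineIndependent_of_norm_sub_eq_rpow hx hα₀ hα₁ hf).card_le_finrank_succ
  have hspan := Submodule.finrank_le (vectorSpan ℝ (Set.range f))
  rw [Fintype.card_fin] at hcard
  rw [finrank_euclideanSpace_fin] at hspan
  omega

/-- Main theorem: the image of any isometric embedding of the `α`-snowflake of an
`n`-point subset of a Hilbert space into a Euclidean space is affinely independent;
in particular, for `n ≥ 2` the snowflake does not embed isometrically into `ℝ^(n-2)`. -/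
theorem snowflake_embedding_affineIndependent {H : Type*} [NormedAddCommGroup H]
    [InnerProductSpace ℝ H] [CompleteSpace H]
    (n : ℕ) (x : Fin n → H) (hx : Function.Injective x) (α : ℝ) (hα₀ : 0 < α) (hα₁ : α < 1) :
    (∀ k : ℕ, ∀ f : Fin n → EuclideanSpace ℝ (Fin k),
      (∀ i j, ‖f i - f j‖ = ‖x i - x j‖ ^ α) → AffineIndependent ℝ f) ∧
    (2 ≤ n → ¬ ∃ f : Fin n → EuclideanSpace ℝ (Fin (n - 2)),
      ∀ i j, ‖f i - f j‖ = ‖x i - x j‖ ^ α) :=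
  snowflake_embedding_affineIndependent_general n x hx α hα₀ hα₁
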